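/- For every separable state σ on ℂ² ⊗ ℂ², Tr((X⊗X + Y⊗Y + Z⊗Z) σ) ≥ −1. Equivalently, ⟨ψ⁻|σ|ψ⁻⟩ ≤ 1/2 and Tr(M σ) ≤ 2/3 for the operator M = (I₄ + 2|ψ⁻⟩⟨ψ⁻|)/3; that is, a separable two-qubit state passes the test 'measure the same uniformly random Pauli observable P ∈ {X,Y,Z} on each qubit and accept iff the two outcomes differ' with probability at most 2/3, whereas the singlet passes it with probability 1. -/

import Mathlib

open scoped Kronecker ComplexOrder
open Matrix

/-- The trace norm (Schatten 1-norm) of a complex matrix: `Tr √(Xᴴ X)`. -/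
noncomputable def traceNorm {n : Type*} [Fintype n] [DecidableEq n] (X : Matrix n n ℂ) : ℝ :=
  (((Matrix.posSemidef_conjTranspose_mul_self X).1.eigenvectorUnitary.1 *
      diagonal (fun i => ((Real.sqrt ((Matrix.posSemidef_conjTranspose_mul_self X).1.eigenvalues i) : ℝ) : ℂ)) *
      (star (Matrix.posSemidef_conjTranspose_mul_self X).1.eigenvectorUnitary : Matrix n n ℂ)).trace).re

/-- A quantum state: a positive semidefinite matrix with unit trace. -/
def IsState {n : Type*} [Fintype n] (ρ : Matrix n n ℂ) : Prop :=
  ρ.PosSemidef ∧ ρ.trace = 1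

/-- The outer product `|v⟩⟨v|`. -/
def outer {n : Type*} (v : n → ℂ) : Matrix n n ℂ :=
  Matrix.of fun i j => v i * star (v j)

/-- A unit vector. -/
def IsUnitVec {n : Type*} [Fintype n] (v : n → ℂ) : Prop :=
  ∑ i, star (v i) * v i = 1

/-- A bipartite separable state: a finite convex combination of tensor products of states. -/
def SeparableState {a b : Type*} [Fintype a] [Fintype b]
    (σ : Matrix (a × b) (a × b) ℂ) : Prop :=
  ∃ (m : ℕ) (p : Fin m → ℝ) (σA : Fin m → Matrix a a ℂ) (σB : Fin m → Matrix b b ℂ),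
    (∀ y, 0 ≤ p y) ∧ (∑ y, p y = 1) ∧ (∀ y, IsState (σA y)) ∧ (∀ y, IsState (σB y)) ∧
    σ = ∑ y, (p y : ℂ) • (σA y ⊗ₖ σB y)

/-- A maximally entangled unit vector `(1/√d) Σ_k |e_k⟩ ⊗ |f_k⟩` built from two
orthonormal bases `e`, `f` of `ℂ^d`. -/
def MaxEntangled {d : ℕ} (φ : Fin d × Fin d → ℂ) : Prop :=
  ∃ e f : Fin d → Fin d → ℂ,
    (∀ i j, ∑ x, star (e i x) * e j x = if i = j then (1 : ℂ) else 0) ∧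
    (∀ i j, ∑ x, star (f i x) * f j x = if i = j then (1 : ℂ) else 0) ∧
    ∀ x, φ x = ((Real.sqrt d : ℂ))⁻¹ * ∑ k, e k x.1 * f k x.2

/-- The singlet `|ψ⁻⟩ = (|0⟩⊗|1⟩ − |1⟩⊗|0⟩)/√2` in `ℂ² ⊗ ℂ²`. -/
noncomputable def singlet : Fin 2 × Fin 2 → ℂ := fun x =>
  if x = ((0 : Fin 2), (1 : Fin 2)) then ((Real.sqrt 2 : ℂ))⁻¹
  else if x = ((1 : Fin 2), (0 : Fin 2)) then -((Real.sqrt 2 : ℂ))⁻¹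
  else 0

/-- Pauli `X`. -/
def pauliX : Matrix (Fin 2) (Fin 2) ℂ := !![0, 1; 1, 0]

/-- Pauli `Z`. -/
def pauliZ : Matrix (Fin 2) (Fin 2) ℂ := !![1, 0; 0, -1]

/-- Pauli `Y = iXZ`. -/
noncomputable def pauliY : Matrix (Fin 2) (Fin 2) ℂ := Complex.I • (pauliX * pauliZ)

/-- The test operator `M = (I₄ + 2|ψ⁻⟩⟨ψ⁻|)/3`, the acceptance operator of the test
"measure the same uniformly random Pauli observable on each qubit and accept iff the
outcomes differ". -/
noncomputable def pauliTestOp : Matrix (Fin 2 × Fin 2) (Fin 2 × Fin 2) ℂ :=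
  ((3 : ℂ))⁻¹ • ((1 : Matrix (Fin 2 × Fin 2) (Fin 2 × Fin 2) ℂ) + (2 : ℂ) • outer singlet)

/-! For product states, `⟨ψ⁻|ρ_A ⊗ ρ_B|ψ⁻⟩ = (Tr ρ_A Tr ρ_B - Tr(ρ_A ρ_B))/2 ≤ 1/2`, because the
trace of a product of positive semidefinite matrices is nonnegative; by linearity the bound passes
to convex combinations, i.e. to separable states. Both `X⊗X + Y⊗Y + Z⊗Z = 1 - 4|ψ⁻⟩⟨ψ⁻|` and
`M = (1 + 2|ψ⁻⟩⟨ψ⁻|)/3` are affine in `|ψ⁻⟩⟨ψ⁻|`, so the other two bounds follow, and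
`M|ψ⁻⟩ = |ψ⁻⟩` gives acceptance probability `1` for the singlet. -/

namespace Matrix

lemma PosSemidef.trace_mul_nonneg {𝕜 n : Type*} [RCLike 𝕜] [Fintype n] [DecidableEq n]
    {A B : Matrix n n 𝕜} (hA : A.PosSemidef) (hB : B.PosSemidef) : 0 ≤ (A * B).trace := by
  open scoped MatrixOrder in
  obtain ⟨C, rfl⟩ := CStarAlgebra.nonneg_iff_eq_star_mul_self.mp hA.nonneg
  rw [star_eq_conjTranspose, Matrix.mul_assoc, trace_mul_comm]
  exact (hB.mul_mul_conjTranspose_same C).trace_nonneg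

end Matrix

lemma outer_eq_vecMulVec {n : Type*} (v : n → ℂ) : outer v = vecMulVec v (star v) := rfl

lemma trace_outer_mul {n : Type*} [Fintype n] (v : n → ℂ) (σ : Matrix n n ℂ) :
    (outer v * σ).trace = star v ⬝ᵥ σ *ᵥ v := by
  rw [outer_eq_vecMulVec, vecMulVec_mul, trace_vecMulVec, dotProduct_comm, dotProduct_mulVec]

lemma trace_outer {n : Type*} [Fintype n] (v : n → ℂ) : (outer v).trace = star v ⬝ᵥ v := by
  rw [outer_eq_vecMulVec, trace_vecMulVec, dotProduct_comm]

lemma outer_mul_outer {n : Type*} [Fintype n] (v : n → ℂ) :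
    outer v * outer v = (star v ⬝ᵥ v) • outer v := by
  simp only [outer_eq_vecMulVec, vecMulVec_mul_vecMulVec, vecMulVec_smul]

lemma SeparableState.trace_mul_le {a b : Type*} [Fintype a] [Fintype b]
    {σ : Matrix (a × b) (a × b) ℂ} (hσ : SeparableState σ) (W : Matrix (a × b) (a × b) ℂ) {c : ℂ}
    (hW : ∀ A B, IsState A → IsState B → (W * (A ⊗ₖ B)).trace ≤ c) : (W * σ).trace ≤ c := by
  obtain ⟨m, p, σA, σB, hp, hp1, hA, hB, rfl⟩ := hσ
  calc (W * ∑ y, (p y : ℂ) • (σA y ⊗ₖ σB y)).trace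
      = ∑ y, (p y : ℂ) * (W * (σA y ⊗ₖ σB y)).trace := by
        simp only [Matrix.mul_sum, trace_sum, Matrix.mul_smul, trace_smul, smul_eq_mul]
    _ ≤ ∑ y, (p y : ℂ) * c := Finset.sum_le_sum fun y _ =>
        mul_le_mul_of_nonneg_left (hW _ _ (hA y) (hB y)) (Complex.zero_le_real.mpr (hp y))
    _ = c := by rw [← Finset.sum_mul, ← Complex.ofReal_sum, hp1, Complex.ofReal_one, one_mul]

lemma Complex.inv_ofReal_sqrt_two_sq : ((Real.sqrt 2 : ℂ))⁻¹ ^ 2 = 2⁻¹ := by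
  rw [inv_pow, ← Complex.ofReal_pow, Real.sq_sqrt zero_le_two, Complex.ofReal_ofNat]

lemma singlet_expectation_kronecker (A B : Matrix (Fin 2) (Fin 2) ℂ) :
    star singlet ⬝ᵥ (A ⊗ₖ B) *ᵥ singlet = 2⁻¹ * (A.trace * B.trace - (A * B).trace) := by
  simp only [dotProduct, Pi.star_apply, singlet, Fin.isValue, RCLike.star_def, mulVec,
    kroneckerMap_apply, mul_ite, mul_neg, mul_zero, Fintype.sum_prod_type, Prod.mk.injEq,
    Fin.sum_univ_two, zero_ne_one, and_false, ↓reduceIte, and_true, one_ne_zero, zero_add, add_zero,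
    map_zero, zero_mul, map_inv₀, Complex.conj_ofReal, map_neg, neg_mul, trace, diag_apply, mul_apply]
  ring_nf
  rw [Complex.inv_ofReal_sqrt_two_sq]
  ring

lemma star_singlet_dotProduct_singlet : star singlet ⬝ᵥ singlet = 1 := by
  have h := singlet_expectation_kronecker 1 1
  rw [one_kronecker_one, one_mulVec, trace_one] at h
  norm_num at h
  exact h

-- `X⊗X + Y⊗Y + Z⊗Z = 2·SWAP - 1`, and `SWAP = 1 - 2|ψ⁻⟩⟨ψ⁻|`.
lemma pauliSum_eq_one_sub_outer_singlet :
    pauliX ⊗ₖ pauliX + pauliY ⊗ₖ pauliY + pauliZ ⊗ₖ pauliZ = 1 - (4 : ℂ) • outer singlet := by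
  ext ⟨i, j⟩ ⟨k, l⟩
  fin_cases i <;> fin_cases j <;> fin_cases k <;> fin_cases l <;>
    simp [pauliX, pauliY, pauliZ, outer, singlet, one_apply, Prod.ext_iff] <;>
    (ring_nf; rw [Complex.inv_ofReal_sqrt_two_sq]; norm_num)

lemma trace_outer_singlet_mul_kronecker_le {A B : Matrix (Fin 2) (Fin 2) ℂ} (hA : IsState A)
    (hB : IsState B) : (outer singlet * (A ⊗ₖ B)).trace ≤ 2⁻¹ := by
  rw [trace_outer_mul, singlet_expectation_kronecker, hA.2, hB.2, mul_one, mul_sub, mul_one]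
  exact sub_le_self _ (mul_nonneg (inv_nonneg.mpr zero_le_two) (hA.1.trace_mul_nonneg hB.1))

lemma trace_pauliSum_mul (σ : Matrix (Fin 2 × Fin 2) (Fin 2 × Fin 2) ℂ) :
    ((pauliX ⊗ₖ pauliX + pauliY ⊗ₖ pauliY + pauliZ ⊗ₖ pauliZ) * σ).trace
      = σ.trace - 4 * (outer singlet * σ).trace := by
  rw [pauliSum_eq_one_sub_outer_singlet, Matrix.sub_mul, Matrix.one_mul, Matrix.smul_mul,
    trace_sub, trace_smul, smul_eq_mul]

lemma trace_pauliTestOp_mul (σ : Matrix (Fin 2 × Fin 2) (Fin 2 × Fin 2) ℂ) :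
    (pauliTestOp * σ).trace = 3⁻¹ * (σ.trace + 2 * (outer singlet * σ).trace) := by
  rw [pauliTestOp, Matrix.smul_mul, Matrix.add_mul, Matrix.one_mul, Matrix.smul_mul, trace_smul,
    trace_add, trace_smul, smul_eq_mul, smul_eq_mul]

/-- Every separable two-qubit state `σ` satisfies
`Tr((X⊗X + Y⊗Y + Z⊗Z)σ) ≥ −1`; equivalently `⟨ψ⁻|σ|ψ⁻⟩ ≤ 1/2` and
`Tr(Mσ) ≤ 2/3` where `M = (I₄ + 2|ψ⁻⟩⟨ψ⁻|)/3`, whereas the singlet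
passes the Pauli test with probability `1`: `Tr(M|ψ⁻⟩⟨ψ⁻|) = 1`. -/
theorem stmt3 :
    (∀ σ : Matrix (Fin 2 × Fin 2) (Fin 2 × Fin 2) ℂ, IsState σ → SeparableState σ →
      (-1 : ℂ) ≤ ((pauliX ⊗ₖ pauliX + pauliY ⊗ₖ pauliY + pauliZ ⊗ₖ pauliZ) * σ).trace ∧
      star singlet ⬝ᵥ σ *ᵥ singlet ≤ ((2 : ℂ))⁻¹ ∧
      (pauliTestOp * σ).trace ≤ (2 / 3 : ℂ)) ∧
    (pauliTestOp * outer singlet).trace = 1 := by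
  refine ⟨fun σ hσ hsep => ?_, ?_⟩
  · have hψ : (outer singlet * σ).trace ≤ 2⁻¹ :=
      hsep.trace_mul_le _ fun A B hA hB => trace_outer_singlet_mul_kronecker_le hA hB
    rw [trace_pauliSum_mul, trace_pauliTestOp_mul, hσ.2, ← trace_outer_mul]
    refine ⟨?_, hψ, ?_⟩ <;> rw [Complex.le_def] at hψ ⊢ <;> norm_num at hψ ⊢ <;> constructor <;>
      linarith
  · rw [trace_pauliTestOp_mul, outer_mul_outer, trace_smul, trace_outer,
      star_singlet_dotProduct_singlet]
    norm_num
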